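/- Let n ≥ 2, let A be the n×n tridiagonal matrix with A_{1,1} = A_{n,n} = 1, A_{i,i} = 2 for 1 < i < n, A_{i,i+1} = A_{i+1,i} = -1, and all other entries 0, let α > 0, and let B = (α I_n + A)^{-1}. With p = 1 + α/2 + √(α + α²/4), q = 1 + α/2 - √(α + α²/4), and s = √(α + α²/4), for every 1 ≤ i ≤ n we have B_{i,1} = [ (α/2)(p^{n-i} - q^{n-i}) + s·(p^{n-i} + q^{n-i}) ] / [ (α + α²/2)(p^{n-1} - q^{n-1}) + α·s·(p^{n-1} + q^{n-1}) ]. -/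
import Mathlib


open Matrix

/-- The `n × n` tridiagonal matrix with `A 1 1 = A n n = 1`, diagonal `2` otherwise,
off-diagonal entries `-1`, and all other entries `0` (0-indexed in Lean). -/
noncomputable def triA (n : ℕ) : Matrix (Fin n) (Fin n) ℝ :=
  Matrix.of fun i j =>
    if i = j then (if (i : ℕ) = 0 ∨ (i : ℕ) = n - 1 then 1 else 2)
    else if (i : ℕ) + 1 = (j : ℕ) ∨ (j : ℕ) + 1 = (i : ℕ) then -1 else 0

/-- `B = (α I + A)⁻¹`. -/
noncomputable def Bmat (n : ℕ) (α : ℝ) : Matrix (Fin n) (Fin n) ℝ :=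
  (α • (1 : Matrix (Fin n) (Fin n) ℝ) + triA n)⁻¹

lemma fin_sum_ite {m : ℕ} (c : ℕ) (f : Fin m → ℝ) :
    (∑ j : Fin m, if (j : ℕ) = c then f j else 0) = if h : c < m then f ⟨c, h⟩ else 0 := by
  split_ifs with h
  · rw [Finset.sum_eq_single (⟨c, h⟩ : Fin m)]
    · simp
    · intro b _ hb
      have : (b : ℕ) ≠ c := fun hc => hb (Fin.ext hc)
      simp [this]
    · simp
  · refine Finset.sum_eq_zero fun k _ => ?_
    have : (k : ℕ) ≠ c := by have := k.isLt; omega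
    simp [this]

noncomputable def Dmat (n : ℕ) : Matrix (Fin (n - 1)) (Fin n) ℝ :=
  Matrix.of fun k j => if (j : ℕ) = (k : ℕ) then 1 else if (j : ℕ) = (k : ℕ) + 1 then -1 else 0

lemma triA_factor (n : ℕ) (hn : 2 ≤ n) : triA n = (Dmat n)ᴴ * Dmat n := by
  ext i j
  rw [Matrix.mul_apply]
  simp only [conjTranspose_apply, star_trivial]
  have hi := i.isLt
  have hj := j.isLt
  rcases eq_or_ne (i : ℕ) (j : ℕ) with hij | hij
  · have heq : i = j := Fin.ext hij
    rcases eq_or_ne (i : ℕ) 0 with hi0 | hi0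
    · have hptw : ∀ k : Fin (n - 1), Dmat n k i * Dmat n k j =
          if (k : ℕ) = 0 then 1 else 0 := by
        intro k
        simp only [Dmat, Matrix.of_apply]
        split_ifs <;> first | omega | norm_num
      rw [Finset.sum_congr rfl fun k _ => hptw k, fin_sum_ite 0 (fun _ => (1 : ℝ)),
        dif_pos (by omega : 0 < n - 1)]
      simp only [triA, Matrix.of_apply]
      rw [if_pos heq, if_pos (Or.inl hi0)]
    · have hptw : ∀ k : Fin (n - 1), Dmat n k i * Dmat n k j =
          (if (k : ℕ) = (i : ℕ) then 1 else 0) + (if (k : ℕ) = (i : ℕ) - 1 then 1 else 0) := by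
        intro k
        simp only [Dmat, Matrix.of_apply]
        split_ifs <;> first | omega | norm_num
      rw [Finset.sum_congr rfl fun k _ => hptw k, Finset.sum_add_distrib,
        fin_sum_ite _ (fun _ => (1 : ℝ)), fin_sum_ite _ (fun _ => (1 : ℝ)),
        dif_pos (by omega : (i : ℕ) - 1 < n - 1)]
      simp only [triA, Matrix.of_apply]
      rw [if_pos heq]
      rcases eq_or_ne (i : ℕ) (n - 1) with hin | hin
      · rw [if_pos (Or.inr hin), dif_neg (by omega)]
        norm_num
      · rw [if_neg (by omega), dif_pos (by omega)]
        norm_num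
  · have hne : ¬ i = j := fun h => hij (by rw [h])
    rcases eq_or_ne (j : ℕ) ((i : ℕ) + 1) with hj1 | hj1
    · have hptw : ∀ k : Fin (n - 1), Dmat n k i * Dmat n k j =
          if (k : ℕ) = (i : ℕ) then -1 else 0 := by
        intro k
        simp only [Dmat, Matrix.of_apply]
        split_ifs <;> first | omega | norm_num
      rw [Finset.sum_congr rfl fun k _ => hptw k, fin_sum_ite _ (fun _ => (-1 : ℝ)),
        dif_pos (by omega : (i : ℕ) < n - 1)]
      simp only [triA, Matrix.of_apply]
      rw [if_neg hne, if_pos (Or.inl hj1.symm)]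
    · rcases eq_or_ne (i : ℕ) ((j : ℕ) + 1) with hi1 | hi1
      · have hptw : ∀ k : Fin (n - 1), Dmat n k i * Dmat n k j =
            if (k : ℕ) = (j : ℕ) then -1 else 0 := by
          intro k
          simp only [Dmat, Matrix.of_apply]
          split_ifs <;> first | omega | norm_num
        rw [Finset.sum_congr rfl fun k _ => hptw k, fin_sum_ite _ (fun _ => (-1 : ℝ)),
          dif_pos (by omega : (j : ℕ) < n - 1)]
        simp only [triA, Matrix.of_apply]
        rw [if_neg hne, if_pos (Or.inr hi1.symm)]
      · have hptw : ∀ k : Fin (n - 1), Dmat n k i * Dmat n k j = 0 := by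
          intro k
          simp only [Dmat, Matrix.of_apply]
          split_ifs <;> first | omega | norm_num
        rw [Finset.sum_congr rfl fun k _ => hptw k, Finset.sum_const_zero]
        simp only [triA, Matrix.of_apply]
        rw [if_neg hne, if_neg (by omega)]

lemma M_apply (n : ℕ) (α : ℝ) (i j : Fin n) :
    (α • (1 : Matrix (Fin n) (Fin n) ℝ) + triA n) i j =
      (if (j : ℕ) = (i : ℕ) then α + (if (i : ℕ) = 0 ∨ (i : ℕ) = n - 1 then 1 else 2) else 0)
      + (if (j : ℕ) = (i : ℕ) + 1 then -1 else 0)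
      + (if (i : ℕ) ≠ 0 ∧ (j : ℕ) = (i : ℕ) - 1 then -1 else 0) := by
  have hi := i.isLt
  simp only [Matrix.add_apply, Matrix.smul_apply, Matrix.one_apply, triA, Matrix.of_apply,
    smul_eq_mul, Fin.ext_iff]
  split_ifs <;> first | omega | ring

lemma M_posDef (n : ℕ) (hn : 2 ≤ n) (α : ℝ) (hα : 0 < α) :
    (α • (1 : Matrix (Fin n) (Fin n) ℝ) + triA n).PosDef := by
  have h1 : (α • (1 : Matrix (Fin n) (Fin n) ℝ)) = Matrix.diagonal (fun _ => α) := by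
    ext i j
    by_cases h : i = j <;> simp [Matrix.one_apply, Matrix.diagonal, h]
  have hA : (triA n).PosSemidef := by
    rw [triA_factor n hn]
    exact Matrix.posSemidef_conjTranspose_mul_self _
  rw [h1]
  exact (Matrix.PosDef.diagonal fun _ => hα).add_posSemidef hA

/-- closed form for the first column of `B = (α I + A)⁻¹`.
Lean's row index `i : Fin n` corresponds to the math index `i + 1 ∈ {1, …, n}`,
so the math exponent `n - (i+1)` is `n - 1 - i` here. -/
theorem stmt_2 (n : ℕ) (hn : 2 ≤ n) (α : ℝ) (hα : 0 < α)
    (s p q : ℝ) (hs : s = Real.sqrt (α + α ^ 2 / 4))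
    (hp : p = 1 + α / 2 + s) (hq : q = 1 + α / 2 - s) (i : Fin n) :
    Bmat n α i ⟨0, by omega⟩ =
      ((α / 2) * (p ^ (n - 1 - (i : ℕ)) - q ^ (n - 1 - (i : ℕ)))
        + s * (p ^ (n - 1 - (i : ℕ)) + q ^ (n - 1 - (i : ℕ))))
      / ((α + α ^ 2 / 2) * (p ^ (n - 1) - q ^ (n - 1))
        + α * s * (p ^ (n - 1) + q ^ (n - 1))) := by
  have h0n : 0 < n := by omega
  have hs2 : s ^ 2 = α + α ^ 2 / 4 := by
    rw [hs]; exact Real.sq_sqrt (by positivity)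
  have hspos : 0 < s := by rw [hs]; positivity
  have hp0 : 0 < p := by rw [hp]; linarith
  have hq0 : 0 < q := by nlinarith
  have hqp : q < p := by rw [hp, hq]; linarith
  have hpow : q ^ (n - 1) < p ^ (n - 1) := pow_lt_pow_left₀ hqp hq0.le (by omega)
  have hpowp : 0 < p ^ (n - 1) + q ^ (n - 1) :=
    add_pos (pow_pos hp0 _) (pow_pos hq0 _)
  set Dd : ℝ := (α + α ^ 2 / 2) * (p ^ (n - 1) - q ^ (n - 1))
      + α * s * (p ^ (n - 1) + q ^ (n - 1)) with hDd
  have hD : 0 < Dd := by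
    have h1 := mul_pos (show (0:ℝ) < α + α ^ 2 / 2 by positivity) (sub_pos.2 hpow)
    have h2 := mul_pos (mul_pos hα hspos) hpowp
    rw [hDd]; linarith
  set f : ℕ → ℝ := fun k => (α / 2) * (p ^ k - q ^ k) + s * (p ^ k + q ^ k) with hf
  have key_rec : ∀ k : ℕ, f (k + 2) = (2 + α) * f (k + 1) - f k := by
    intro k
    simp only [hf]
    subst hp hq
    linear_combination ((α/2+s)*(1+α/2+s)^k + (s-α/2)*(1+α/2-s)^k) * hs2
  have key1 : ∀ k : ℕ, (α + 1) * f (k + 1) - f k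
      = (α + α ^ 2 / 2) * (p ^ (k + 1) - q ^ (k + 1)) + α * s * (p ^ (k + 1) + q ^ (k + 1)) := by
    intro k
    simp only [hf]
    subst hp hq
    linear_combination ((1+α/2+s)^k - (1+α/2-s)^k) * hs2
  have key0 : (α + 1) * f 0 - f 1 = 0 := by
    simp only [hf]; subst hp hq; ring
  set v : Fin n → ℝ := fun j => f (n - 1 - (j : ℕ)) / Dd with hv
  set M : Matrix (Fin n) (Fin n) ℝ := α • (1 : Matrix (Fin n) (Fin n) ℝ) + triA n with hM
  have hMv : M *ᵥ v = Pi.single (⟨0, h0n⟩ : Fin n) 1 := by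
    funext r
    have hr := r.isLt
    show (∑ j, M r j * v j) = _
    rcases eq_or_ne (r : ℕ) 0 with hr0 | hr0
    · have hrn : (r : ℕ) ≠ n - 1 := by omega
      have hexp : ∀ j : Fin n, M r j * v j =
          (if (j : ℕ) = 0 then (α + 1) * v j else 0) + (if (j : ℕ) = 1 then -v j else 0) := by
        intro j
        rw [hM, M_apply]
        split_ifs <;> first | omega | ring
      rw [Finset.sum_congr rfl fun j _ => hexp j, Finset.sum_add_distrib,
        fin_sum_ite 0 (fun j => (α + 1) * v j), fin_sum_ite 1 (fun j => -v j),
        dif_pos h0n, dif_pos (by omega : 1 < n)]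
      have hr' : r = ⟨0, h0n⟩ := Fin.ext hr0
      rw [hr', Pi.single_eq_same]
      simp only [hv]
      have e1 : n - 1 - ((⟨0, h0n⟩ : Fin n) : ℕ) = n - 2 + 1 := by simp; omega
      have e2 : n - 1 - ((⟨1, by omega⟩ : Fin n) : ℕ) = n - 2 := by simp; omega
      rw [e1, e2]
      have hco : (α + 1) * (f (n - 2 + 1) / Dd) + -(f (n - 2) / Dd)
          = ((α + 1) * f (n - 2 + 1) - f (n - 2)) / Dd := by ring
      rw [hco, key1 (n - 2)]
      have e3 : n - 2 + 1 = n - 1 := by omega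
      rw [e3, ← hDd, div_self hD.ne']
    · rcases eq_or_ne (r : ℕ) (n - 1) with hrn | hrn
      · have hexp : ∀ j : Fin n, M r j * v j =
            (if (j : ℕ) = n - 1 then (α + 1) * v j else 0)
            + (if (j : ℕ) = n - 2 then -v j else 0) := by
          intro j
          have hj := j.isLt
          rw [hM, M_apply]
          split_ifs <;> first | omega | ring
        rw [Finset.sum_congr rfl fun j _ => hexp j, Finset.sum_add_distrib,
          fin_sum_ite (n - 1) (fun j => (α + 1) * v j), fin_sum_ite (n - 2) (fun j => -v j),
          dif_pos (by omega : n - 1 < n), dif_pos (by omega : n - 2 < n)]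
        rw [Pi.single_eq_of_ne (by simp [Fin.ext_iff]; omega)]
        simp only [hv]
        have e1 : n - 1 - ((⟨n - 1, by omega⟩ : Fin n) : ℕ) = 0 := by simp
        have e2 : n - 1 - ((⟨n - 2, by omega⟩ : Fin n) : ℕ) = 1 := by simp; omega
        rw [e1, e2]
        have hco : (α + 1) * (f 0 / Dd) + -(f 1 / Dd) = ((α + 1) * f 0 - f 1) / Dd := by ring
        rw [hco, key0, zero_div]
      · -- interior row
        have hexp : ∀ j : Fin n, M r j * v j =
            (if (j : ℕ) = (r : ℕ) then (α + 2) * v j else 0)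
            + (if (j : ℕ) = (r : ℕ) + 1 then -v j else 0)
            + (if (j : ℕ) = (r : ℕ) - 1 then -v j else 0) := by
          intro j
          have hj := j.isLt
          rw [hM, M_apply]
          split_ifs <;> first | omega | ring
        rw [Finset.sum_congr rfl fun j _ => hexp j, Finset.sum_add_distrib,
          Finset.sum_add_distrib,
          fin_sum_ite (r : ℕ) (fun j => (α + 2) * v j),
          fin_sum_ite ((r : ℕ) + 1) (fun j => -v j),
          fin_sum_ite ((r : ℕ) - 1) (fun j => -v j),
          dif_pos (by omega : (r : ℕ) < n), dif_pos (by omega : (r : ℕ) + 1 < n),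
          dif_pos (by omega : (r : ℕ) - 1 < n)]
        rw [Pi.single_eq_of_ne (by simp [Fin.ext_iff]; omega)]
        simp only [hv]
        have e1 : n - 1 - ((⟨(r : ℕ), by omega⟩ : Fin n) : ℕ) = (n - 2 - (r : ℕ)) + 1 := by
          simp; omega
        have e2 : n - 1 - ((⟨(r : ℕ) + 1, by omega⟩ : Fin n) : ℕ) = n - 2 - (r : ℕ) := by
          simp; omega
        have e3 : n - 1 - ((⟨(r : ℕ) - 1, by omega⟩ : Fin n) : ℕ) = (n - 2 - (r : ℕ)) + 2 := by
          simp; omega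
        rw [e1, e2, e3]
        have hco : (α + 2) * (f (n - 2 - (r : ℕ) + 1) / Dd) + -(f (n - 2 - (r : ℕ)) / Dd)
            + -(f (n - 2 - (r : ℕ) + 2) / Dd)
            = ((α + 2) * f (n - 2 - (r : ℕ) + 1) - f (n - 2 - (r : ℕ))
              - f (n - 2 - (r : ℕ) + 2)) / Dd := by ring
        rw [hco]
        rw [key_rec (n - 2 - (r : ℕ))]
        have : (α + 2) * f (n - 2 - (r : ℕ) + 1) - f (n - 2 - (r : ℕ))
            - ((2 + α) * f (n - 2 - (r : ℕ) + 1) - f (n - 2 - (r : ℕ))) = 0 := by ring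
        rw [this, zero_div]
  have hMpos : M.PosDef := M_posDef n hn α hα
  have hdet : IsUnit M.det := (Matrix.isUnit_iff_isUnit_det M).1 hMpos.isUnit
  have hvB : v = M⁻¹ *ᵥ Pi.single (⟨0, h0n⟩ : Fin n) 1 := by
    rw [← hMv, Matrix.mulVec_mulVec, Matrix.nonsing_inv_mul M hdet, Matrix.one_mulVec]
  have hB : Bmat n α i ⟨0, by omega⟩ = v i := by
    have : (M⁻¹ *ᵥ Pi.single (⟨0, h0n⟩ : Fin n) 1) i = M⁻¹ i ⟨0, h0n⟩ := by
      simp [Matrix.mulVec_single]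
    rw [Bmat, ← hM, ← this, ← hvB]
  rw [hB]
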